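/- If b > 1 and α > 0, then p₆(x) = 4b²(1+b⁴α⁶)x⁶ + α²(b⁴-1)x⁵ + b²α⁴(b⁴-1)x⁴ + 2b⁴(1+α⁶)x³ + b²α²(b⁴-1)x² + α⁴(b⁴-1)x + b²(b⁴+α⁶) has no positive real root; hence the map g(x) = α²(1+b²x³)/(b²+x³) has no periodic points of prime period 2 in (0,∞). -/

import Mathlib

/-!
Write `g = N / D` with `N x = α²(1 + b²x³)` and `D x = b² + x³`. Clearing denominators,
`g (g x) - x = (g x - x) · D(x) · Q(x) / (b² D(x)³ + N(x)³)`, where `Q = periodTwoFactor` is `p₆`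
with leading coefficient `b²` in place of `4b²`. For `b⁴ ≥ 1` every coefficient of `Q` (and of `p₆`) is
nonnegative and the constant term is positive, so for `x > 0` all factors but `g x - x` are
positive: a solution of `g (g x) = x` is a fixed point of `g`.
-/

noncomputable section

def hillMap (α b x : ℝ) : ℝ := α ^ 2 * (1 + b ^ 2 * x ^ 3) / (b ^ 2 + x ^ 3)

def periodTwoFactor (α b x : ℝ) : ℝ :=
  b ^ 2 * (1 + b ^ 4 * α ^ 6) * x ^ 6 + α ^ 2 * (b ^ 4 - 1) * x ^ 5
    + b ^ 2 * α ^ 4 * (b ^ 4 - 1) * x ^ 4 + 2 * b ^ 4 * (1 + α ^ 6) * x ^ 3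
    + b ^ 2 * α ^ 2 * (b ^ 4 - 1) * x ^ 2 + α ^ 4 * (b ^ 4 - 1) * x
    + b ^ 2 * (b ^ 4 + α ^ 6)

end

variable {α b x : ℝ}

lemma hillMap_div (N : ℝ) {D : ℝ} (hD : D ≠ 0) :
    hillMap α b (N / D) = α ^ 2 * (D ^ 3 + b ^ 2 * N ^ 3) / (b ^ 2 * D ^ 3 + N ^ 3) := by
  calc hillMap α b (N / D)
      = α ^ 2 * (D ^ 3 + b ^ 2 * N ^ 3) / D ^ 3 / ((b ^ 2 * D ^ 3 + N ^ 3) / D ^ 3) := by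
        unfold hillMap
        congr 1 <;> field_simp
    _ = _ := div_div_div_cancel_right₀ (pow_ne_zero 3 hD) _ _

lemma hillMap_hillMap_sub (hD : b ^ 2 + x ^ 3 ≠ 0)
    (hE : b ^ 2 * (b ^ 2 + x ^ 3) ^ 3 + (α ^ 2 * (1 + b ^ 2 * x ^ 3)) ^ 3 ≠ 0) :
    hillMap α b (hillMap α b x) - x
      = (hillMap α b x - x) * ((b ^ 2 + x ^ 3) * periodTwoFactor α b x
          / (b ^ 2 * (b ^ 2 + x ^ 3) ^ 3 + (α ^ 2 * (1 + b ^ 2 * x ^ 3)) ^ 3)) := by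
  rw [show hillMap α b x = α ^ 2 * (1 + b ^ 2 * x ^ 3) / (b ^ 2 + x ^ 3) from rfl,
    hillMap_div _ hD, div_sub' hE, mul_div_assoc', div_left_inj' hE, periodTwoFactor]
  field_simp
  ring

lemma periodTwoFactor_pos (hb : 1 ≤ b ^ 4) (hx : 0 < x) : 0 < periodTwoFactor α b x := by
  have hb0 : b ≠ 0 := by rintro rfl; norm_num at hb
  have hb4 : 0 ≤ b ^ 4 - 1 := sub_nonneg.mpr hb
  unfold periodTwoFactor
  positivity

theorem stmt_14_general (α b : ℝ) (hb : 1 < b)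
    (g : ℝ → ℝ) (hg : ∀ x : ℝ, g x = α ^ 2 * (1 + b ^ 2 * x ^ 3) / (b ^ 2 + x ^ 3)) :
    (∀ x : ℝ, 0 < x →
      4 * b ^ 2 * (1 + b ^ 4 * α ^ 6) * x ^ 6 + α ^ 2 * (b ^ 4 - 1) * x ^ 5
        + b ^ 2 * α ^ 4 * (b ^ 4 - 1) * x ^ 4 + 2 * b ^ 4 * (1 + α ^ 6) * x ^ 3
        + b ^ 2 * α ^ 2 * (b ^ 4 - 1) * x ^ 2 + α ^ 4 * (b ^ 4 - 1) * x
        + b ^ 2 * (b ^ 4 + α ^ 6) ≠ 0) ∧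
    ¬ ∃ x : ℝ, 0 < x ∧ g (g x) = x ∧ g x ≠ x := by
  have hb4 : 1 ≤ b ^ 4 := one_le_pow₀ hb.le
  obtain rfl : g = hillMap α b := funext hg
  refine ⟨fun x hx => ?_, fun ⟨x, hx, hperiod, hfixed⟩ => hfixed ?_⟩
  · have hQ := periodTwoFactor_pos (α := α) hb4 hx
    have hlead : 0 ≤ 3 * b ^ 2 * (1 + b ^ 4 * α ^ 6) * x ^ 6 := by positivity
    unfold periodTwoFactor at hQ
    linarith
  · have hD : 0 < b ^ 2 + x ^ 3 := by positivity
    have hE : 0 < b ^ 2 * (b ^ 2 + x ^ 3) ^ 3 + (α ^ 2 * (1 + b ^ 2 * x ^ 3)) ^ 3 := by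
      positivity
    have h := hillMap_hillMap_sub hD.ne' hE.ne'
    rw [hperiod, sub_self, eq_comm, mul_eq_zero, sub_eq_zero] at h
    refine h.resolve_right ?_
    have hQ := periodTwoFactor_pos (α := α) hb4 hx
    positivity

/-- If `b > 1` and `α > 0`, then `p₆` has no positive real root; hence
`g(x) = α²(1+b²x³)/(b²+x³)` has no periodic points of prime period 2 in
`(0,∞)`. -/
theorem stmt_14 (α b : ℝ) (hα : 0 < α) (hb : 1 < b)
    (g : ℝ → ℝ) (hg : ∀ x : ℝ, g x = α ^ 2 * (1 + b ^ 2 * x ^ 3) / (b ^ 2 + x ^ 3)) :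
    (∀ x : ℝ, 0 < x →
      4 * b ^ 2 * (1 + b ^ 4 * α ^ 6) * x ^ 6 + α ^ 2 * (b ^ 4 - 1) * x ^ 5
        + b ^ 2 * α ^ 4 * (b ^ 4 - 1) * x ^ 4 + 2 * b ^ 4 * (1 + α ^ 6) * x ^ 3
        + b ^ 2 * α ^ 2 * (b ^ 4 - 1) * x ^ 2 + α ^ 4 * (b ^ 4 - 1) * x
        + b ^ 2 * (b ^ 4 + α ^ 6) ≠ 0) ∧
    ¬ ∃ x : ℝ, 0 < x ∧ g (g x) = x ∧ g x ≠ x :=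
  stmt_14_general α b hb g hg
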